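/- Let (X,d,μ) be upper doubling with dominating function λ and constant C_λ, and let C_0 > C_λ^7. Then for every x ∈ X and every r > 0 with μ(B(x,r)) > 0 there exists an integer k ≥ 0 such that the ball B := B(x, 100^k·r) satisfies the doubling condition μ(100B) ≤ C_0·μ(B). In particular, every bounded set X' ⊂ X with X' ∩ supp μ ≠ ∅ is contained in a ball B with μ(100B) ≤ C_0·μ(B). -/

import Mathlib

open MeasureTheory Metric Set ENNReal

noncomputable section

variable {X : Type*} [MetricSpace X] [MeasurableSpace X] [BorelSpace X]

/-- The support of a measure on a metric space: points all of whose balls have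
positive measure. -/
def msupport (μ : Measure X) : Set X := {x | ∀ r : ℝ, 0 < r → 0 < μ (ball x r)}

/-- `(X, d, μ)` is upper doubling with dominating function `lam` and constant `Cl`. -/
structure IsUpperDoubling (μ : Measure X) (lam : X → ℝ → ℝ) (Cl : ℝ) : Prop where
  one_lt : 1 < Cl
  lam_pos : ∀ x r, 0 < r → 0 < lam x r
  lam_mono : ∀ x r₁ r₂, 0 < r₁ → r₁ ≤ r₂ → lam x r₁ ≤ lam x r₂
  measure_le : ∀ x r, 0 < r → μ (ball x r) ≤ ENNReal.ofReal (lam x r)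
  halving : ∀ x r, 0 < r → lam x r ≤ Cl * lam x (r / 2)
  close : ∀ x y r, 0 < r → dist x y ≤ r → lam x r ≤ Cl * lam y r

/-- `(X, d)` is geometrically doubling with constant `C` and doubling dimension `n`:
every `r`-separated subset of a ball of radius `R ≥ r` has cardinality at most `C (R/r)^n`. -/
def GeometricallyDoubling (X : Type*) [MetricSpace X] (C : ℝ) (n : ℕ) : Prop :=
  ∀ (x : X) (R r : ℝ), 0 < r → r ≤ R →
    ∀ S : Finset X, (↑S : Set X) ⊆ ball x R →
      (∀ a ∈ S, ∀ b ∈ S, a ≠ b → r ≤ dist a b) → (S.card : ℝ) ≤ C * (R / r) ^ n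

/-- `ω` is a Dini modulus of continuity. -/
structure IsDiniModulus (ω : ℝ → ℝ) : Prop where
  nonneg : ∀ t, 0 ≤ t → 0 ≤ ω t
  mono : MonotoneOn ω (Set.Ici 0)
  subadd : ∀ s t, 0 ≤ s → 0 ≤ t → ω (s + t) ≤ ω s + ω t
  zero : ω 0 = 0
  pos : ∀ t, 0 < t → 0 < ω t
  summable : Summable (fun j : ℕ => ω ((2 : ℝ) ^ (-(j : ℤ))))

/-- The Dini norm `∑_{j ≥ 0} ω(2^{-j})`. -/
def diniNorm (ω : ℝ → ℝ) : ℝ := ∑' j : ℕ, ω ((2 : ℝ) ^ (-(j : ℤ)))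

/-- `K` is a Calderón–Zygmund kernel with size constant `CK` and modulus of continuity `ω`,
relative to the dominating function `lam`. -/
structure IsCZKernel (lam : X → ℝ → ℝ) (K : X → X → ℂ) (CK : ℝ) (ω : ℝ → ℝ) : Prop where
  size : ∀ x y, x ≠ y → ‖K x y‖ ≤ CK / lam x (dist x y)
  smooth : ∀ x x' y, x ≠ y → dist x x' < dist x y / 2 →
    ‖K x y - K x' y‖ + ‖K y x - K y x'‖ ≤ ω (dist x x' / dist x y) / lam x (dist x y)

/-- The maximal truncation `T^♯ f(x) = sup_{ε > 0} |∫_{d(x,y) > ε} K(x,y) f(y) dμ(y)|`,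
valued in `ℝ≥0∞`. -/
noncomputable def Tsharp (μ : Measure X) (K : X → X → ℂ) (f : X → ℂ) (x : X) : ℝ≥0∞ :=
  ⨆ (ε : ℝ) (_ : 0 < ε), ENNReal.ofReal ‖∫ y in (closedBall x ε)ᶜ, K x y * f y ∂μ‖

/-- `T` is an `L²(μ)`-bounded Calderón–Zygmund operator with kernel `K` and `L²` norm
bound `CT`. -/
structure IsCZOperator (μ : Measure X) (K : X → X → ℂ) (T : (X → ℂ) → X → ℂ) (CT : ℝ) :
    Prop where
  map_add : ∀ f g, MemLp f 2 μ → MemLp g 2 μ → T (f + g) = T f + T g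
  map_smul : ∀ (c : ℂ) (f), MemLp f 2 μ → T (c • f) = c • T f
  norm_bound : ∀ f, MemLp f 2 μ → eLpNorm (T f) 2 μ ≤ ENNReal.ofReal CT * eLpNorm f 2 μ
  rep : ∀ f : X → ℂ, (∃ M, ∀ x, ‖f x‖ ≤ M) → Bornology.IsBounded (Function.support f) →
    ∀ x, x ∉ tsupport f → T f x = ∫ y, K x y * f y ∂μ

/-- A David–Mattila lattice with parameters `C0, A0` associated to `μ`:
for each generation `k` a Borel partition `cells k` of `supp μ`, each cell `Q` carrying a
ball `B(Q) = B(center k Q, radius k Q)`. -/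
structure DavidMattila (μ : Measure X) (C0 A0 : ℝ) where
  cells : ℕ → Set (Set X)
  center : ℕ → Set X → X
  radius : ℕ → Set X → ℝ
  measurable : ∀ k, ∀ Q ∈ cells k, MeasurableSet Q
  cover : ∀ k, ⋃₀ cells k = msupport μ
  pairwise_disjoint : ∀ k, ∀ Q ∈ cells k, ∀ R ∈ cells k, Q ≠ R → Disjoint Q R
  nested : ∀ k l, k < l → ∀ Q ∈ cells l, ∀ R ∈ cells k, Q ⊆ R ∨ Disjoint Q R
  center_mem : ∀ k, ∀ Q ∈ cells k, center k Q ∈ msupport μ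
  radius_lb : ∀ k, ∀ Q ∈ cells k, A0 ^ (-(k : ℤ)) ≤ radius k Q
  radius_ub : ∀ k, ∀ Q ∈ cells k, radius k Q ≤ C0 * A0 ^ (-(k : ℤ))
  ball_subset : ∀ k, ∀ Q ∈ cells k, msupport μ ∩ ball (center k Q) (radius k Q) ⊆ Q
  subset_ball : ∀ k, ∀ Q ∈ cells k, Q ⊆ msupport μ ∩ ball (center k Q) (28 * radius k Q)
  disjoint_five : ∀ k, ∀ Q ∈ cells k, ∀ R ∈ cells k, Q ≠ R →
    Disjoint (ball (center k Q) (5 * radius k Q)) (ball (center k R) (5 * radius k R))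
  nondoubling : ∀ k, ∀ Q ∈ cells k,
    ENNReal.ofReal C0 * μ (ball (center k Q) (radius k Q)) <
        μ (ball (center k Q) (100 * radius k Q)) →
      radius k Q = A0 ^ (-(k : ℤ)) ∧
      ∀ c : ℝ, 1 ≤ c → c ≤ C0 →
        ENNReal.ofReal C0 * μ (ball (center k Q) (c * radius k Q)) ≤
          μ (ball (center k Q) (100 * c * radius k Q))

/-- The average `A(f,Q) = μ(αB(Q))⁻¹ ∫_{30B(Q)} |f| dμ` attached to a ball `B(z,r)`. -/
noncomputable def cellAvg (μ : Measure X) (α : ℝ) (f : X → ℂ) (z : X) (r : ℝ) : ℝ≥0∞ :=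
  (∫⁻ y in ball z (30 * r), ‖f y‖₊ ∂μ) / μ (ball z (α * r))

/-- `Θ(Q) = μ(αB(Q)) / λ(z_Q, α r(Q))`. -/
noncomputable def theta (μ : Measure X) (lam : X → ℝ → ℝ) (α : ℝ) (z : X) (r : ℝ) : ℝ≥0∞ :=
  μ (ball z (α * r)) / ENNReal.ofReal (lam z (α * r))

/-- The maximal function `M_λ f(x) = sup_{R>0} λ(x,R)⁻¹ ∫_{B(x,R)} |f| dμ`. -/
noncomputable def Mlam (μ : Measure X) (lam : X → ℝ → ℝ) (f : X → ℂ) (x : X) : ℝ≥0∞ :=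
  ⨆ (R : ℝ) (_ : 0 < R), (∫⁻ y in ball x R, ‖f y‖₊ ∂μ) / ENNReal.ofReal (lam x R)

/-- The localized grand maximal truncated operator `N_{Q₀}`. -/
noncomputable def grandMax (μ : Measure X) {C0 A0 : ℝ} (D : DavidMattila μ C0 A0)
    (K : X → X → ℂ) (Q0 : Set X) (f : X → ℂ) (x : X) : ℝ≥0∞ :=
  Q0.indicator (fun x' =>
    ⨆ (k : ℕ) (P : Set X) (_ : P ∈ D.cells k) (_ : x' ∈ P) (_ : P ⊆ Q0) (y : X) (_ : y ∈ P),
      ENNReal.ofReal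
        ‖∫ z in (ball (D.center k P) (30 * D.radius k P))ᶜ, K y z * f z ∂μ‖) x

/-- `∫_S w dμ` for a weight `w`. -/
noncomputable def wInt (μ : Measure X) (w : X → ℝ) (S : Set X) : ℝ≥0∞ :=
  ∫⁻ x in S, ENNReal.ofReal (w x) ∂μ

end

/-! If none of the balls `B(x, 100^k r)` were `C₀`-doubling, their measures would grow at least
like `C₀^k`, whereas `λ(x, 100 s) ≤ C_λ^7 λ(x, s)` (as `100 ≤ 2^7`) caps them by
`λ(x, r) (C_λ^7)^k`. -/

theorem exists_succ_le_mul_of_le_geometric {m : ℕ → ℝ≥0∞} {a b c : ℝ} (hb : 0 < b)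
    (hbc : b < c) (h0 : m 0 ≠ 0) (hm : ∀ k, m k ≤ ENNReal.ofReal (a * b ^ k)) :
    ∃ k, m (k + 1) ≤ ENNReal.ofReal c * m k := by
  by_contra! hgrowth
  have hlow : ∀ k, ENNReal.ofReal c ^ k * m 0 ≤ m k := by
    intro k
    induction k with
    | zero => simp
    | succ k ih =>
      calc ENNReal.ofReal c ^ (k + 1) * m 0
          = ENNReal.ofReal c * (ENNReal.ofReal c ^ k * m 0) := by ring
        _ ≤ ENNReal.ofReal c * m k := by gcongr
        _ ≤ m (k + 1) := (hgrowth k).le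
  have hm0 : m 0 ≠ ⊤ := ne_top_of_le_ne_top ofReal_ne_top (hm 0)
  have ht : 0 < (m 0).toReal := toReal_pos h0 hm0
  have hc : 0 < c := hb.trans hbc
  obtain ⟨k, hk⟩ := pow_unbounded_of_one_lt (a / (m 0).toReal) ((one_lt_div hb).2 hbc)
  have hck : c ^ k * (m 0).toReal ≤ a * b ^ k := by
    have h := (hlow k).trans (hm k)
    rw [← ofReal_toReal hm0, ← ofReal_pow hc.le, ← ofReal_mul (by positivity),
      ofReal_le_ofReal_iff'] at h
    exact h.resolve_right (not_le.mpr (by positivity))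
  rw [div_pow, lt_div_iff₀ (by positivity), div_mul_eq_mul_div, div_lt_iff₀ ht] at hk
  linarith

namespace IsUpperDoubling

variable {X : Type*} [MetricSpace X] [MeasurableSpace X] {μ : Measure X}
  {lam : X → ℝ → ℝ} {Cl : ℝ}

theorem lam_le_pow_mul_div_two_pow (hud : IsUpperDoubling μ lam Cl) (x : X) (n : ℕ) {r : ℝ}
    (hr : 0 < r) : lam x r ≤ Cl ^ n * lam x (r / 2 ^ n) := by
  induction n generalizing r with
  | zero => simp
  | succ n ih =>
    calc lam x r ≤ Cl * lam x (r / 2) := hud.halving x r hr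
      _ ≤ Cl * (Cl ^ n * lam x (r / 2 / 2 ^ n)) := by
          gcongr
          · linarith [hud.one_lt]
          · exact ih (by positivity)
      _ = Cl ^ (n + 1) * lam x (r / 2 ^ (n + 1)) := by ring_nf

theorem lam_hundred_mul_le (hud : IsUpperDoubling μ lam Cl) (x : X) {r : ℝ} (hr : 0 < r) :
    lam x (100 * r) ≤ Cl ^ 7 * lam x r := by
  calc lam x (100 * r) ≤ Cl ^ 7 * lam x (100 * r / 2 ^ 7) :=
        hud.lam_le_pow_mul_div_two_pow x 7 (by positivity)
    _ ≤ Cl ^ 7 * lam x r := by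
        have := hud.one_lt
        gcongr
        exact hud.lam_mono x _ r (by positivity) (by linarith)

theorem lam_hundred_pow_mul_le (hud : IsUpperDoubling μ lam Cl) (x : X) {r : ℝ} (hr : 0 < r)
    (k : ℕ) : lam x (100 ^ k * r) ≤ lam x r * (Cl ^ 7) ^ k := by
  induction k with
  | zero => simp
  | succ k ih =>
    have := hud.one_lt
    calc lam x (100 ^ (k + 1) * r) = lam x (100 * (100 ^ k * r)) := by ring_nf
      _ ≤ Cl ^ 7 * lam x (100 ^ k * r) := hud.lam_hundred_mul_le x (by positivity)
      _ ≤ Cl ^ 7 * (lam x r * (Cl ^ 7) ^ k) := by gcongr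
      _ = lam x r * (Cl ^ 7) ^ (k + 1) := by ring

theorem exists_hundred_pow_doubling (hud : IsUpperDoubling μ lam Cl) {C0 : ℝ}
    (hC0 : Cl ^ 7 < C0) {x : X} {r : ℝ} (hr : 0 < r) (hpos : 0 < μ (ball x r)) :
    ∃ k : ℕ, μ (ball x (100 * (100 ^ k * r))) ≤
      ENNReal.ofReal C0 * μ (ball x (100 ^ k * r)) := by
  have hbound : ∀ k : ℕ,
      μ (ball x (100 ^ k * r)) ≤ ENNReal.ofReal (lam x r * (Cl ^ 7) ^ k) :=
    fun k ↦ (hud.measure_le x _ (by positivity)).trans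
      (ofReal_le_ofReal (hud.lam_hundred_pow_mul_le x hr k))
  obtain ⟨k, hk⟩ := exists_succ_le_mul_of_le_geometric (pow_pos (by linarith [hud.one_lt]) 7)
    hC0 (by simpa using hpos.ne') hbound
  exact ⟨k, by rwa [pow_succ', mul_assoc] at hk⟩

end IsUpperDoubling

open MeasureTheory Metric Set ENNReal in
theorem doubling_ball_exists_general
    {X : Type*} [MetricSpace X] [MeasurableSpace X] [BorelSpace X]
    (μ : Measure X)
    (lam : X → ℝ → ℝ) (Cl : ℝ) (hud : IsUpperDoubling μ lam Cl)
    (C0 : ℝ) (hC0 : Cl ^ 7 < C0) :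
    (∀ (x : X) (r : ℝ), 0 < r → 0 < μ (ball x r) →
      ∃ k : ℕ, μ (ball x (100 * (100 ^ k * r))) ≤
        ENNReal.ofReal C0 * μ (ball x (100 ^ k * r))) ∧
    (∀ X' : Set X, Bornology.IsBounded X' → (X' ∩ msupport μ).Nonempty →
      ∃ (z : X) (R : ℝ), 0 < R ∧ X' ⊆ ball z R ∧
        μ (ball z (100 * R)) ≤ ENNReal.ofReal C0 * μ (ball z R)) := by
  refine ⟨fun x r hr hpos ↦ hud.exists_hundred_pow_doubling hC0 hr hpos, ?_⟩
  rintro X' hbdd ⟨x, -, hx⟩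
  obtain ⟨r, hr, hX'⟩ := hbdd.subset_ball_lt 0 x
  obtain ⟨k, hk⟩ := hud.exists_hundred_pow_doubling hC0 hr (hx r hr)
  refine ⟨x, 100 ^ k * r, by positivity, hX'.trans (ball_subset_ball ?_), hk⟩
  exact le_mul_of_one_le_left hr.le (one_le_pow₀ (by norm_num))

open MeasureTheory Metric Set ENNReal in
/-- Existence of doubling balls for an upper doubling measure: if `C₀ > C_λ^7`, any
ball of positive measure can be dilated by a power of `100` to a `C₀`-doubling ball;
in particular any bounded set meeting `supp μ` is contained in a doubling ball. -/
theorem doubling_ball_exists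
    {X : Type*} [MetricSpace X] [MeasurableSpace X] [BorelSpace X]
    (μ : Measure X) [IsLocallyFiniteMeasure μ]
    (lam : X → ℝ → ℝ) (Cl : ℝ) (hud : IsUpperDoubling μ lam Cl)
    (C0 : ℝ) (hC0 : Cl ^ 7 < C0) :
    (∀ (x : X) (r : ℝ), 0 < r → 0 < μ (ball x r) →
      ∃ k : ℕ, μ (ball x (100 * (100 ^ k * r))) ≤
        ENNReal.ofReal C0 * μ (ball x (100 ^ k * r))) ∧
    (∀ X' : Set X, Bornology.IsBounded X' → (X' ∩ msupport μ).Nonempty →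
      ∃ (z : X) (R : ℝ), 0 < R ∧ X' ⊆ ball z R ∧
        μ (ball z (100 * R)) ≤ ENNReal.ofReal C0 * μ (ball z R)) :=
  doubling_ball_exists_general μ lam Cl hud C0 hC0
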